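/- arXiv:1904.02875 — 2 statements merged into one kernel-verified Lean document; each statement's English description precedes it below -/
import Mathlib

section
/- If a sequence (v_n) with v_n → ∞ satisfies v_{n+1} = v_n + c·v_n^{1-α} for constants c > 0 and α > 1 (with v_0 > 0), then v_n/n^{1/α} → (cα)^{1/α} as n → ∞. -/
/-!
Raising the recursion to the power `α` linearises it: with `t = c v^{-α} → 0`,
`v_{n+1}^α - v_n^α = c ((1 + t)^α - 1) / t → c α`, the derivative of `(1 + s)^α` at `0`.
By Cesàro, `v_n^α / n → c α`, and taking `α`-th roots gives the claim.
-/

open Filter Real Topology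

theorem tendsto_div_natCast_of_tendsto_sub_succ {u : ℕ → ℝ} {l : ℝ}
    (h : Tendsto (fun n => u (n + 1) - u n) atTop (𝓝 l)) :
    Tendsto (fun n : ℕ => u n / n) atTop (𝓝 l) := by
  have h := (tendsto_const_div_atTop_nhds_zero_nat (u 0)).add h.cesaro
  rw [zero_add] at h
  refine h.congr' ?_
  filter_upwards [eventually_gt_atTop 0] with n hn
  have hn : (n : ℝ) ≠ 0 := Nat.cast_ne_zero.mpr hn.ne'
  rw [Finset.sum_range_sub (fun i => u i) n]
  field_simp
  ring

theorem tendsto_one_add_rpow_sub_one_div (α : ℝ) :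
    Tendsto (fun s : ℝ => ((1 + s) ^ α - 1) / s) (𝓝[≠] 0) (𝓝 α) := by
  have hderiv : HasDerivAt (fun s : ℝ => (1 + s) ^ α) α 0 := by
    have h := (Real.hasDerivAt_rpow_const (p := α) (x := 1 + 0) (Or.inl (by norm_num))).comp 0
      ((hasDerivAt_id (0 : ℝ)).const_add 1)
    simpa [Function.comp_def] using h
  refine (hasDerivAt_iff_tendsto_slope.mp hderiv).congr fun s => ?_
  simp [slope_def_field]

theorem rpow_add_mul_rpow_one_sub_sub_rpow {x c : ℝ} (hx : 0 < x) (hc : 0 < c) (α : ℝ) :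
    (x + c * x ^ (1 - α)) ^ α - x ^ α
      = c * (((1 + c * x ^ (-α)) ^ α - 1) / (c * x ^ (-α))) := by
  have hxα : x ^ α * x ^ (-α) = 1 := by rw [← rpow_add hx, add_neg_cancel, rpow_zero]
  have hfactor : x + c * x ^ (1 - α) = x * (1 + c * x ^ (-α)) := by
    rw [sub_eq_add_neg, rpow_add hx, rpow_one]
    ring
  have ht : 0 < c * x ^ (-α) := by positivity
  rw [hfactor, mul_rpow hx.le (by positivity), mul_div_assoc', eq_div_iff ht.ne']
  linear_combination c * ((1 + c * x ^ (-α)) ^ α - 1) * hxα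

/-- If `(v_n)` with `v_n → ∞` satisfies `v_{n+1} = v_n + c v_n^{1-α}` with `c > 0`,
`α > 1`, `v_0 > 0`, then `v_n / n^{1/α} → (c α)^{1/α}`. -/
theorem stmt_16 (c α : ℝ) (hc : 0 < c) (hα : 1 < α) (v : ℕ → ℝ) (hv0 : 0 < v 0)
    (hv : Tendsto v atTop atTop)
    (hrec : ∀ n, v (n + 1) = v n + c * (v n) ^ (1 - α)) :
    Tendsto (fun n : ℕ => v n / (n : ℝ) ^ (1 / α)) atTop (nhds ((c * α) ^ (1 / α))) := by
  have hα0 : 0 < α := one_pos.trans hα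
  have hpos : ∀ n, 0 < v n := by
    intro n
    induction n with
    | zero => exact hv0
    | succ n ih => rw [hrec]; positivity
  have ht : Tendsto (fun n => c * v n ^ (-α)) atTop (𝓝[≠] 0) := by
    refine tendsto_nhdsWithin_of_tendsto_nhds_of_eventually_within _ ?_
      (Eventually.of_forall fun n => (mul_pos hc (rpow_pos_of_pos (hpos n) _)).ne')
    simpa using ((tendsto_rpow_neg_atTop hα0).comp hv).const_mul c
  have hdiff : Tendsto (fun n => v (n + 1) ^ α - v n ^ α) atTop (𝓝 (c * α)) := by
    refine (((tendsto_one_add_rpow_sub_one_div α).comp ht).const_mul c).congr fun n => ?_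
    rw [hrec, rpow_add_mul_rpow_one_sub_sub_rpow (hpos n) hc]
    rfl
  refine ((tendsto_div_natCast_of_tendsto_sub_succ (u := fun n => v n ^ α) hdiff).rpow_const
    (p := 1 / α) (Or.inr (by positivity))).congr fun n => ?_
  rw [div_rpow (rpow_nonneg (hpos n).le _) n.cast_nonneg, ← rpow_mul (hpos n).le,
    mul_one_div_cancel hα0.ne', rpow_one]
end

section
/- For p ∈ (0,1), the sequence defined by v_0 ≥ 0 and v_{n+1} = v_n + (1-p)^{v_n}/p satisfies v_n·|log(1-p)|/log n → 1 as n → ∞, and moreover n·(1-p)^{v_n} → p/|log(1-p)|. -/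
open Filter Real Topology

/-!
With `c = |log (1 - p)|`, the quantity `u n = exp (c * v n) = (1 - p) ^ (-v n)` satisfies
`u (n + 1) = u n * exp (c / p / u n)`. Since `exp x ≥ 1 + x`, `u` grows at least linearly, and
then `t (exp (a / t) - 1) → a` shows that its increments tend to `c / p`; by Cesàro,
`u n / n → c / p`. Taking logarithms gives the first limit, and inverting gives the second,
because `n * (1 - p) ^ v n = n / u n`.
-/

theorem add_le_mul_exp_div {a t : ℝ} (ht : 0 < t) : t + a ≤ t * exp (a / t) := by
  have := mul_le_mul_of_nonneg_left (add_one_le_exp (a / t)) ht.le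
  rwa [mul_add, mul_div_cancel₀ _ ht.ne', mul_one, add_comm a] at this

theorem tendsto_mul_exp_div_sub_self (a : ℝ) :
    Tendsto (fun t => t * exp (a / t) - t) atTop (𝓝 a) := by
  rcases eq_or_ne a 0 with rfl | ha
  · simp
  have hslope : Tendsto (fun s => s⁻¹ * (exp s - 1)) (𝓝[≠] 0) (𝓝 1) := by
    simpa using (hasDerivAt_exp 0).tendsto_slope_zero
  have hdiv : Tendsto (fun t => a / t) atTop (𝓝[≠] 0) :=
    tendsto_nhdsWithin_of_tendsto_nhds_of_eventually_within _
      (tendsto_const_nhds.div_atTop tendsto_id)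
      (eventually_gt_atTop 0 |>.mono fun t ht => div_ne_zero ha ht.ne')
  have := (hslope.comp hdiv).const_mul a
  rw [mul_one] at this
  refine this.congr' ?_
  filter_upwards [eventually_gt_atTop 0] with t ht
  simp only [Function.comp_apply, inv_div]
  field_simp

theorem tendsto_div_natCast_of_tendsto_sub {u : ℕ → ℝ} {a : ℝ}
    (h : Tendsto (fun n => u (n + 1) - u n) atTop (𝓝 a)) :
    Tendsto (fun n : ℕ => u n / n) atTop (𝓝 a) := by
  have hmean : Tendsto (fun n : ℕ => (u n - u 0) / n) atTop (𝓝 a) :=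
    h.cesaro.congr fun n => by rw [Finset.sum_range_sub, inv_mul_eq_div]
  simpa [← add_div] using hmean.add (tendsto_const_div_atTop_nhds_zero_nat (u 0))

theorem tendsto_log_div_log_of_tendsto_div {u : ℕ → ℝ} {L : ℝ} (hL : 0 < L)
    (h : Tendsto (fun n : ℕ => u n / n) atTop (𝓝 L)) :
    Tendsto (fun n : ℕ => log (u n) / log n) atTop (𝓝 1) := by
  have hlog : Tendsto (fun n : ℕ => log (u n / n)) atTop (𝓝 (log L)) :=
    (continuousAt_log hL.ne').tendsto.comp h
  have hloginv : Tendsto (fun n : ℕ => (log n)⁻¹) atTop (𝓝 0) :=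
    tendsto_inv_atTop_zero.comp (tendsto_log_atTop.comp tendsto_natCast_atTop_atTop)
  have := (hlog.mul hloginv).add_const 1
  rw [mul_zero, zero_add] at this
  refine this.congr' ?_
  filter_upwards [h.eventually (lt_mem_nhds hL), eventually_ge_atTop 2] with n hpos hn
  have hn : (1 : ℝ) < n := by exact_mod_cast hn
  have hn0 : (0 : ℝ) < n := by linarith
  have hu : 0 < u n := by simpa [div_pos_iff, hn0, hn0.not_gt] using hpos
  rw [log_div hu.ne' hn0.ne']
  field_simp [(log_pos hn).ne']
  ring

section ExpRecursion

variable {a : ℝ} {u : ℕ → ℝ}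

theorem add_mul_le_of_mul_exp_div (ha : 0 < a) (hu0 : 0 < u 0)
    (hu : ∀ n, u (n + 1) = u n * exp (a / u n)) (n : ℕ) : u 0 + n * a ≤ u n := by
  induction n with
  | zero => simp
  | succ k ih =>
    have hk : 0 < u k := by nlinarith [Nat.cast_nonneg (α := ℝ) k]
    rw [hu k]
    push_cast
    linarith [add_le_mul_exp_div (a := a) hk]

theorem tendsto_div_natCast_of_mul_exp_div (ha : 0 < a) (hu0 : 0 < u 0)
    (hu : ∀ n, u (n + 1) = u n * exp (a / u n)) :
    Tendsto (fun n : ℕ => u n / n) atTop (𝓝 a) := by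
  have hu_top : Tendsto u atTop atTop :=
    tendsto_atTop_mono (add_mul_le_of_mul_exp_div ha hu0 hu) <|
      tendsto_atTop_add_const_left _ _ (tendsto_natCast_atTop_atTop.atTop_mul_const ha)
  refine tendsto_div_natCast_of_tendsto_sub ?_
  simp only [hu]
  exact (tendsto_mul_exp_div_sub_self a).comp hu_top

end ExpRecursion

theorem stmt_18_general (p : ℝ) (hp : p ∈ Set.Ioo (0 : ℝ) 1) (v : ℕ → ℝ)
    (hrec : ∀ n, v (n + 1) = v n + (1 - p) ^ (v n) / p) :
    Tendsto (fun n : ℕ => v n * |Real.log (1 - p)| / Real.log n) atTop (nhds 1) ∧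
    Tendsto (fun n : ℕ => (n : ℝ) * (1 - p) ^ (v n)) atTop
      (nhds (p / |Real.log (1 - p)|)) := by
  obtain ⟨hp0, hp1⟩ := hp
  have hlog : log (1 - p) < 0 := log_neg (by linarith) (by linarith)
  have hpow : ∀ x : ℝ, (1 - p) ^ x = (exp (|log (1 - p)| * x))⁻¹ := fun x => by
    rw [rpow_def_of_pos (by linarith), abs_of_neg hlog, ← exp_neg, neg_mul_eq_neg_mul, neg_neg]
  set c := |log (1 - p)|
  have hc : 0 < c := abs_pos.mpr hlog.ne
  set u := fun n => exp (c * v n)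
  have hu : ∀ n, u (n + 1) = u n * exp (c / p / u n) := fun n => by
    simp only [u, hrec, hpow, ← exp_add]
    congr 1
    field_simp
  have hlim := tendsto_div_natCast_of_mul_exp_div (div_pos hc hp0) (exp_pos _) hu
  constructor
  · refine (tendsto_log_div_log_of_tendsto_div (div_pos hc hp0) hlim).congr fun n => ?_
    simp only [u, log_exp, mul_comm c]
  · simpa [hpow, u, div_eq_mul_inv, mul_comm] using hlim.inv₀ (div_pos hc hp0).ne'

/-- For `p ∈ (0,1)`, the sequence `v_0 ≥ 0`, `v_{n+1} = v_n + (1-p)^{v_n}/p` satisfies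
`v_n |log(1-p)| / log n → 1` and `n (1-p)^{v_n} → p/|log(1-p)|`. -/
theorem stmt_18 (p : ℝ) (hp : p ∈ Set.Ioo (0 : ℝ) 1) (v : ℕ → ℝ) (hv0 : 0 ≤ v 0)
    (hrec : ∀ n, v (n + 1) = v n + (1 - p) ^ (v n) / p) :
    Tendsto (fun n : ℕ => v n * |Real.log (1 - p)| / Real.log n) atTop (nhds 1) ∧
    Tendsto (fun n : ℕ => (n : ℝ) * (1 - p) ^ (v n)) atTop
      (nhds (p / |Real.log (1 - p)|)) :=
  stmt_18_general p hp v hrec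
end
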